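/- arXiv:1802.06905 — 12 statements merged into one kernel-verified Lean document; each statement's English description precedes it below -/
import Mathlib

section
/- Let V be any finite set of 7-tuples of integers (b,c,k,w,h,r,s). Then |V| ≤ (|φ1(V)| · |φ2(V)| · |φ3(V)|)^(2/3). (This is the discrete Hölder–Brascamp–Lieb inequality for the three CNN array-subscript projections, with the optimal exponents s1 = s2 = s3 = 2/3 whose sum 2 is the minimal value of the associated linear program.) -/
/-- The tuple type `ℤ^7`, with coordinates `(b, c, k, w, h, r, s)`. -/
abbrev Tuple7 : Type := ℤ × ℤ × ℤ × ℤ × ℤ × ℤ × ℤ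

/-- `φ1(b,c,k,w,h,r,s) = (b,k,w,h)`, the subscripts of `Out`. -/
def phi1 : Tuple7 → ℤ × ℤ × ℤ × ℤ
  | (b, _, k, w, h, _, _) => (b, k, w, h)

/-- `φ2(b,c,k,w,h,r,s) = (b,c,r+σw·w,s+σh·h)`, the subscripts of `Image`. -/
def phi2 (σw σh : ℤ) : Tuple7 → ℤ × ℤ × ℤ × ℤ
  | (b, c, _, w, h, r, s) => (b, c, r + σw * w, s + σh * h)

/-- `φ3(b,c,k,w,h,r,s) = (c,k,r,s)`, the subscripts of `Filter`. -/
def phi3 : Tuple7 → ℤ × ℤ × ℤ × ℤ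
  | (_, c, k, _, _, r, s) => (c, k, r, s)

lemma pair_card {α β γ : Type*} [DecidableEq α] [DecidableEq β] [DecidableEq γ]
    (V : Finset α) (f : α → β) (g : α → γ)
    (hinj : Set.InjOn (fun x => (f x, g x)) V) :
    V.card ≤ (V.image f).card * (V.image g).card := by
  calc V.card = (V.image (fun x => (f x, g x))).card :=
        (Finset.card_image_of_injOn hinj).symm
    _ ≤ ((V.image f) ×ˢ (V.image g)).card := by
        apply Finset.card_le_card
        intro p hp
        simp only [Finset.mem_image, Finset.mem_product] at hp ⊢
        obtain ⟨x, hx, hfx⟩ := hp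
        exact ⟨⟨x, hx, by rw [← hfx]⟩, ⟨x, hx, by rw [← hfx]⟩⟩
    _ = _ := Finset.card_product _ _

/-- The discrete Hölder–Brascamp–Lieb inequality for the three CNN
array-subscript projections, with optimal exponents `s1 = s2 = s3 = 2/3`:
`|V| ≤ (|φ1(V)| · |φ2(V)| · |φ3(V)|)^(2/3)`. -/
theorem cnn_hbl_two_thirds (σw σh : ℤ) (hσw : 0 < σw) (hσh : 0 < σh)
    (V : Finset Tuple7) :
    (V.card : ℝ) ≤
      (((V.image phi1).card : ℝ) * ((V.image (phi2 σw σh)).card : ℝ) *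
        ((V.image phi3).card : ℝ)) ^ ((2 : ℝ) / 3) := by
  classical
  have hσw' : σw ≠ 0 := hσw.ne'
  have hσh' : σh ≠ 0 := hσh.ne'
  -- pairwise joint injectivity
  have h12 : V.card ≤ (V.image phi1).card * (V.image (phi2 σw σh)).card := by
    apply pair_card
    rintro ⟨b, c, k, w, h, r, s⟩ - ⟨b', c', k', w', h', r', s'⟩ - heq
    simp only [phi1, phi2, Prod.mk.injEq] at heq
    obtain ⟨⟨hb, hk, hw, hh⟩, _, hc, hr, hs⟩ := heq
    subst hb hk hw hh hc
    have h1 : r = r' := by linarith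
    have h2 : s = s' := by linarith
    subst h1 h2
    rfl
  have h13 : V.card ≤ (V.image phi1).card * (V.image phi3).card := by
    apply pair_card
    rintro ⟨b, c, k, w, h, r, s⟩ - ⟨b', c', k', w', h', r', s'⟩ - heq
    simp only [phi1, phi3, Prod.mk.injEq] at heq
    obtain ⟨⟨hb, hk, hw, hh⟩, hc, _, hr, hs⟩ := heq
    subst hb hk hw hh hc hr hs
    rfl
  have h23 : V.card ≤ (V.image (phi2 σw σh)).card * (V.image phi3).card := by
    apply pair_card
    rintro ⟨b, c, k, w, h, r, s⟩ - ⟨b', c', k', w', h', r', s'⟩ - heq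
    simp only [phi2, phi3, Prod.mk.injEq] at heq
    obtain ⟨⟨hb, hc, hx, hy⟩, _, hk, hr, hs⟩ := heq
    subst hr hs
    have hw : w = w' := by
      have hx' : σw * w = σw * w' := by linarith
      exact mul_left_cancel₀ hσw' hx'
    have hh : h = h' := by
      have hy' : σh * h = σh * h' := by linarith
      exact mul_left_cancel₀ hσh' hy'
    subst hb hc hk hw hh
    rfl
  obtain ⟨A, hAdef⟩ : ∃ x : ℝ, x = ((V.image phi1).card : ℝ) := ⟨_, rfl⟩
  obtain ⟨B, hBdef⟩ : ∃ x : ℝ, x = ((V.image (phi2 σw σh)).card : ℝ) := ⟨_, rfl⟩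
  obtain ⟨C, hCdef⟩ : ∃ x : ℝ, x = ((V.image phi3).card : ℝ) := ⟨_, rfl⟩
  rw [← hAdef, ← hBdef, ← hCdef]
  have hA : 0 ≤ A := by rw [hAdef]; positivity
  have hB : 0 ≤ B := by rw [hBdef]; positivity
  have hC : 0 ≤ C := by rw [hCdef]; positivity
  have hcube : ((V.card : ℝ)) ^ (3 : ℕ) ≤ (A * B * C) ^ (2 : ℕ) := by
    have h12' : (V.card : ℝ) ≤ A * B := by rw [hAdef, hBdef]; exact_mod_cast h12
    have h13' : (V.card : ℝ) ≤ A * C := by rw [hAdef, hCdef]; exact_mod_cast h13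
    have h23' : (V.card : ℝ) ≤ B * C := by rw [hBdef, hCdef]; exact_mod_cast h23
    have hV : (0 : ℝ) ≤ (V.card : ℝ) := by positivity
    calc ((V.card : ℝ)) ^ (3 : ℕ) = (V.card : ℝ) * (V.card : ℝ) * (V.card : ℝ) := by ring
      _ ≤ (A * B) * (A * C) * (B * C) := by
          apply mul_le_mul (mul_le_mul h12' h13' hV (by positivity)) h23' hV
          positivity
      _ = (A * B * C) ^ (2 : ℕ) := by ring
  have hV : (0 : ℝ) ≤ (V.card : ℝ) := by positivity
  have key := Real.rpow_le_rpow (by positivity) hcube (by norm_num : (0:ℝ) ≤ 1/3)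
  have hABC : 0 ≤ A * B * C := by positivity
  calc (V.card : ℝ) = (((V.card : ℝ)) ^ (3 : ℕ)) ^ ((1 : ℝ)/3) := by
        rw [← Real.rpow_natCast _ 3, ← Real.rpow_mul hV]
        norm_num
    _ ≤ ((A * B * C) ^ (2 : ℕ)) ^ ((1 : ℝ)/3) := key
    _ = (A * B * C) ^ ((2 : ℝ)/3) := by
        rw [← Real.rpow_natCast (A * B * C) 2, ← Real.rpow_mul hABC]
        norm_num
end

section
/- Let M ≥ 0 be a real number and let V be any finite set of 7-tuples of integers (b,c,k,w,h,r,s) such that |φ1(V)| ≤ M, |φ2(V)| ≤ M, and |φ3(V)| ≤ M. Then |V| ≤ M^2. (This is the per-round iteration bound G = M^2 underlying the fourth term BCKWHRS/M of the CNN communication lower bound.) -/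
/-- If each of `|φ1(V)|`, `|φ2(V)|`, `|φ3(V)|` is at most `M`, then
`|V| ≤ M²`: the per-round iteration bound `G = M²` underlying the fourth term
`BCKWHRS/M` of the CNN communication lower bound. -/
theorem cnn_iteration_bound_M_sq (σw σh : ℤ) (hσw : 0 < σw) (hσh : 0 < σh)
    (M : ℝ) (hM : 0 ≤ M) (V : Finset Tuple7)
    (h1 : ((V.image phi1).card : ℝ) ≤ M)
    (h2 : ((V.image (phi2 σw σh)).card : ℝ) ≤ M)
    (h3 : ((V.image phi3).card : ℝ) ≤ M) :
    (V.card : ℝ) ≤ M ^ 2 := by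
  have key : V.card ≤ (V.image phi1).card * (V.image phi3).card := by
    rw [← Finset.card_product]
    apply Finset.card_le_card_of_injOn (fun v => (phi1 v, phi3 v))
    · intro v hv
      exact Finset.mk_mem_product (Finset.mem_image_of_mem _ hv)
        (Finset.mem_image_of_mem _ hv)
    · rintro ⟨b, c, k, w, h, r, s⟩ _ ⟨b', c', k', w', h', r', s'⟩ _ heq
      simp only [phi1, phi3, Prod.mk.injEq] at heq
      obtain ⟨⟨h1, h2, h3, h4⟩, h5, h6, h7, h8⟩ := heq
      simp_all
  calc (V.card : ℝ) ≤ ((V.image phi1).card : ℝ) * ((V.image phi3).card : ℝ) := by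
        exact_mod_cast key
    _ ≤ M * M := by
        apply mul_le_mul h1 h3 (by positivity) hM
    _ = M ^ 2 := (sq M).symm
end

section
/- Let R', S' be positive integers and M ≥ 0 a real number. Let V be any finite set of 9-tuples of integers (b,c,k,w,h,r',r'',s',s'') in which every element satisfies 0 ≤ r' < R' and 0 ≤ s' < S', and such that |φ'1(V)| ≤ M, |φ'2(V)| ≤ M, and |φ'3(V)| ≤ M. Then |V| ≤ (R'·S')^(1/2) · M^(3/2). (With R' = R/σ_w and S' = S/σ_h this is Lemma 2 of the paper: |V| ≤ (R·S)^(1/2)·M^(3/2)/(σ_w·σ_h)^(1/2).) -/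
/-!
Cauchy–Schwarz over the fibres of `φ'2` gives `|V|² ≤ |φ'2(V)| · P`, where `P` counts the pairs
`(v, w) ∈ V²` with `φ'2 v = φ'2 w`. Such a pair is determined by `(φ'1 v, φ'3 w)`: these two
values contain every coordinate of the common value `φ'2 v = φ'2 w`, and then `φ'1 v` supplies
the missing coordinate `k` of `v`, `φ'3 w` the missing coordinate `k` of `w`. Hence
`P ≤ |φ'1(V)| · |φ'3(V)|` and `|V|² ≤ M³`; the factor `√(R'S') ≥ 1` only weakens the bound.
-/

set_option synthInstance.maxSize 512

/-- The tuple type `ℤ^9`, with coordinates `(b, c, k, w, h, r', r'', s', s'')`. -/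
abbrev Tuple9 : Type := ℤ × ℤ × ℤ × ℤ × ℤ × ℤ × ℤ × ℤ × ℤ

/-- `φ'1(b,c,k,w,h,r',r'',s',s'') = (b,k,w,h)`. -/
def phi1' : Tuple9 → ℤ × ℤ × ℤ × ℤ
  | (b, _, k, w, h, _, _, _, _) => (b, k, w, h)

/-- `φ'2(b,c,k,w,h,r',r'',s',s'') = (b,c,r',r'',w,s',s'',h)`. -/
def phi2' : Tuple9 → ℤ × ℤ × ℤ × ℤ × ℤ × ℤ × ℤ × ℤ
  | (b, c, _, w, h, r', r'', s', s'') => (b, c, r', r'', w, s', s'', h)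

/-- `φ'3(b,c,k,w,h,r',r'',s',s'') = (c,k,r',r'',s',s'')`. -/
def phi3' : Tuple9 → ℤ × ℤ × ℤ × ℤ × ℤ × ℤ
  | (_, c, k, _, _, r', r'', s', s'') => (c, k, r', r'', s', s'')

open Finset

namespace Finset

variable {α β γ δ : Type*} [DecidableEq β]

theorem card_filter_product_eq_sum_sq_card_fiber (V : Finset α) (p : α → β) :
    #{x ∈ V ×ˢ V | p x.1 = p x.2} = ∑ b ∈ V.image p, #{v ∈ V | p v = b} ^ 2 := by
  rw [card_eq_sum_card_fiberwise (f := fun x => p x.1) fun x hx =>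
    mem_image_of_mem p (mem_product.1 (mem_filter.1 hx).1).1]
  refine sum_congr rfl fun b _ => ?_
  rw [sq, ← card_product]
  congr 1
  ext ⟨v, w⟩
  simp only [mem_filter, mem_product]
  constructor
  · rintro ⟨⟨⟨hv, hw⟩, hvw⟩, rfl⟩
    exact ⟨⟨hv, rfl⟩, hw, hvw.symm⟩
  · rintro ⟨⟨hv, rfl⟩, hw, hwb⟩
    exact ⟨⟨⟨hv, hw⟩, hwb.symm⟩, rfl⟩

theorem sq_card_le_card_image_mul_card_filter_eq (V : Finset α) (p : α → β) :
    #V ^ 2 ≤ #(V.image p) * #{x ∈ V ×ˢ V | p x.1 = p x.2} := by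
  rw [card_filter_product_eq_sum_sq_card_fiber, card_eq_sum_card_image p V]
  exact sq_sum_le_card_mul_sum_sq

theorem sq_card_le_of_injOn [DecidableEq γ] [DecidableEq δ] (V : Finset α) (p : α → β)
    (f : α → γ) (g : α → δ)
    (hinj : Set.InjOn (fun x : α × α => (f x.1, g x.2)) {x | p x.1 = p x.2}) :
    #V ^ 2 ≤ #(V.image p) * (#(V.image f) * #(V.image g)) := by
  refine (sq_card_le_card_image_mul_card_filter_eq V p).trans (Nat.mul_le_mul_left _ ?_)
  rw [← card_product]
  refine card_le_card_of_injOn _ (fun x hx => ?_) (hinj.mono fun x hx => (mem_filter.1 hx).2)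
  obtain ⟨hv, hw⟩ := mem_product.1 (mem_filter.1 hx).1
  exact mem_product.2 ⟨mem_image_of_mem f hv, mem_image_of_mem g hw⟩

end Finset

theorem phi1'_phi3'_injOn :
    Set.InjOn (fun x : Tuple9 × Tuple9 => (phi1' x.1, phi3' x.2))
      {x | phi2' x.1 = phi2' x.2} := by
  rintro ⟨⟨b, c, k, w, h, r, r₂, s, s₂⟩, ⟨b', c', k', w', h', r', r₂', s', s₂'⟩⟩ hx
    ⟨⟨d, e, l, x, i, t, t₂, u, u₂⟩, ⟨d', e', l', x', i', t', t₂', u', u₂'⟩⟩ hy heq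
  simp only [Set.mem_ofPred_eq, phi1', phi2', phi3', Prod.mk.injEq] at hx hy heq ⊢
  omega

theorem Real.le_rpow_three_halves_of_sq_le {x M : ℝ} (hx : 0 ≤ x) (hM : 0 ≤ M)
    (h : x ^ 2 ≤ M ^ 3) : x ≤ M ^ ((3 : ℝ) / 2) := by
  rw [div_eq_mul_one_div, Real.rpow_mul hM, ← Real.sqrt_eq_rpow, Real.rpow_ofNat]
  exact (Real.le_sqrt hx (by positivity)).2 h

theorem cnn_small_filter_counting_bound_general (R' S' : ℤ) (hR' : 0 < R') (hS' : 0 < S')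
    (M : ℝ) (hM : 0 ≤ M) (V : Finset Tuple9)
    (h1 : ((V.image phi1').card : ℝ) ≤ M)
    (h2 : ((V.image phi2').card : ℝ) ≤ M)
    (h3 : ((V.image phi3').card : ℝ) ≤ M) :
    (V.card : ℝ) ≤ Real.sqrt ((R' : ℝ) * (S' : ℝ)) * M ^ ((3 : ℝ) / 2) := by
  have hsq : (#V : ℝ) ^ 2 ≤ M ^ 3 :=
    calc (#V : ℝ) ^ 2
        ≤ #(V.image phi2') * (#(V.image phi1') * #(V.image phi3')) := by
          exact_mod_cast sq_card_le_of_injOn V phi2' phi1' phi3' phi1'_phi3'_injOn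
      _ ≤ M * (M * M) := by gcongr
      _ = M ^ 3 := by ring
  have hRS : 1 ≤ Real.sqrt ((R' : ℝ) * (S' : ℝ)) := by
    rw [Real.one_le_sqrt]
    exact one_le_mul_of_one_le_of_one_le (by exact_mod_cast hR') (by exact_mod_cast hS')
  calc (#V : ℝ) ≤ M ^ ((3 : ℝ) / 2) := Real.le_rpow_three_halves_of_sq_le (by positivity) hM hsq
    _ ≤ Real.sqrt ((R' : ℝ) * (S' : ℝ)) * M ^ ((3 : ℝ) / 2) :=
      le_mul_of_one_le_left (by positivity) hRS

/-- Lemma 2 of the paper (in lifted form): if every element of `V` satisfies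
`0 ≤ r' < R'` and `0 ≤ s' < S'`, and the three projected images have size at
most `M`, then `|V| ≤ (R'·S')^(1/2) · M^(3/2)`. -/
theorem cnn_small_filter_counting_bound (R' S' : ℤ) (hR' : 0 < R') (hS' : 0 < S')
    (M : ℝ) (hM : 0 ≤ M) (V : Finset Tuple9)
    (hbound : ∀ v ∈ V, 0 ≤ v.2.2.2.2.2.1 ∧ v.2.2.2.2.2.1 < R' ∧
      0 ≤ v.2.2.2.2.2.2.2.1 ∧ v.2.2.2.2.2.2.2.1 < S')
    (h1 : ((V.image phi1').card : ℝ) ≤ M)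
    (h2 : ((V.image phi2').card : ℝ) ≤ M)
    (h3 : ((V.image phi3').card : ℝ) ≤ M) :
    (V.card : ℝ) ≤ Real.sqrt ((R' : ℝ) * (S' : ℝ)) * M ^ ((3 : ℝ) / 2) :=
  cnn_small_filter_counting_bound_general R' S' hR' hS' M hM V h1 h2 h3
end

section
/- Let R, S be positive integers with σ_w ≤ R and σ_h ≤ S, and let M ≥ 0 be a real number. Let V be any finite set of 7-tuples of integers (b,c,k,w,h,r,s) in which every element satisfies 0 ≤ r < R and 0 ≤ s < S, and such that |φ1(V)| ≤ M, |φ2(V)| ≤ M, and |φ3(V)| ≤ M. Then |V| ≤ c · (R·S/(σ_w·σ_h))^(1/2) · M^(3/2) for an absolute constant c (one may take c = 4, accounting for the ceilings of R/σ_w and S/σ_h in the lifting r = σ_w·r' + r'', s = σ_h·s' + s''). This is the counting bound underlying the fifth lower-bound term BCKWH·(RSσ_wσ_h/M)^(1/2). -/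
open Finset

/-- If `v` determines `u` on `A`, then the image of `u` is at most the image of `v`. -/
lemma card_image_le_of_determines {α β γ : Type*} [DecidableEq β] [DecidableEq γ]
    (A : Finset α) (u : α → β) (v : α → γ)
    (H : ∀ a ∈ A, ∀ a' ∈ A, v a = v a' → u a = u a') :
    (A.image u).card ≤ (A.image v).card := by
  classical
  have key : Set.InjOn Prod.fst ((A.image (fun a => (v a, u a))) : Set (γ × β)) := by
    rintro p hp q hq hpq
    simp only [Finset.coe_image, Set.mem_image, Finset.mem_coe] at hp hq
    obtain ⟨a, ha, rfl⟩ := hp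
    obtain ⟨a', ha', rfl⟩ := hq
    have hv : v a = v a' := hpq
    exact Prod.ext hv (H a ha a' ha' hv)
  calc (A.image u).card
      = ((A.image (fun a => (v a, u a))).image Prod.snd).card := by
        rw [Finset.image_image]; rfl
    _ ≤ (A.image (fun a => (v a, u a))).card := Finset.card_image_le
    _ = ((A.image (fun a => (v a, u a))).image Prod.fst).card :=
        (Finset.card_image_of_injOn key).symm
    _ = (A.image v).card := by rw [Finset.image_image]; rfl

/-- Loomis–Whitney-type inequality for a finite set with three jointly injective
coordinates. -/
lemma loomis_whitney {α β γ δ : Type*} [DecidableEq α] [DecidableEq β] [DecidableEq γ]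
    [DecidableEq δ] (T : Finset α) (x : α → β) (y : α → γ) (z : α → δ)
    (hinj : ∀ a ∈ T, ∀ a' ∈ T, x a = x a' → y a = y a' → z a = z a' → a = a') :
    T.card ^ 2 ≤ (T.image fun a => (x a, y a)).card *
      ((T.image fun a => (x a, z a)).card * (T.image fun a => (y a, z a)).card) := by
  classical
  set P := T.image fun a => (x a, y a) with hP
  set fib : β × γ → Finset α := fun p => T.filter (fun a => (x a, y a) = p) with hfib
  have hcard : T.card = ∑ p ∈ P, (fib p).card :=
    card_eq_sum_card_fiberwise (fun a ha => mem_image_of_mem _ ha)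
  have hCS : (T.card : ℕ) ^ 2 ≤ P.card * ∑ p ∈ P, (fib p).card ^ 2 := by
    rw [hcard]
    exact sq_sum_le_card_mul_sum_sq
  set D := P.biUnion (fun p => fib p ×ˢ fib p) with hD
  have hdisj : ∀ p ∈ P, ∀ q ∈ P, p ≠ q → Disjoint (fib p ×ˢ fib p) (fib q ×ˢ fib q) := by
    intro p _ q _ hpq
    refine Finset.disjoint_left.2 ?_
    rintro ⟨a, b⟩ hab hab'
    simp only [hfib, Finset.mem_product, Finset.mem_filter] at hab hab'
    exact hpq (hab.1.2 ▸ hab'.1.2)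
  have hDcard : D.card = ∑ p ∈ P, (fib p).card ^ 2 := by
    rw [hD, card_biUnion hdisj]
    refine Finset.sum_congr rfl fun p _ => ?_
    rw [Finset.card_product, sq]
  have hDmem : ∀ q ∈ D, q.1 ∈ T ∧ q.2 ∈ T ∧ x q.1 = x q.2 ∧ y q.1 = y q.2 := by
    rintro ⟨a, b⟩ hq
    simp only [hD, Finset.mem_biUnion, hfib, Finset.mem_product, Finset.mem_filter] at hq
    obtain ⟨p, _, ⟨ha, hap⟩, ⟨hb, hbp⟩⟩ := hq
    have := hap.trans hbp.symm
    exact ⟨ha, hb, congrArg Prod.fst this, congrArg Prod.snd this⟩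
  have hDle : D.card ≤ (T.image fun a => (x a, z a)).card *
      (T.image fun a => (y a, z a)).card := by
    rw [← Finset.card_product]
    apply Finset.card_le_card_of_injOn (fun q => ((x q.1, z q.1), (y q.2, z q.2)))
    · intro q hq
      obtain ⟨h1, h2, _, _⟩ := hDmem q hq
      exact Finset.mem_product.2 ⟨Finset.mem_image_of_mem _ h1, Finset.mem_image_of_mem _ h2⟩
    · intro q hq q' hq' heq
      simp only [Finset.mem_coe] at hq hq'
      obtain ⟨ht1, ht2, hx12, hy12⟩ := hDmem q hq
      obtain ⟨ht1', ht2', hx12', hy12'⟩ := hDmem q' hq'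
      have e1 : x q.1 = x q'.1 := congrArg (Prod.fst ∘ Prod.fst) heq
      have e2 : z q.1 = z q'.1 := congrArg (Prod.snd ∘ Prod.fst) heq
      have e3 : y q.2 = y q'.2 := congrArg (Prod.fst ∘ Prod.snd) heq
      have e4 : z q.2 = z q'.2 := congrArg (Prod.snd ∘ Prod.snd) heq
      have efst : q.1 = q'.1 :=
        hinj _ ht1 _ ht1' e1 (hy12.trans (e3.trans hy12'.symm)) e2
      have esnd : q.2 = q'.2 :=
        hinj _ ht2 _ ht2' (hx12.symm.trans (e1.trans hx12')) e3 e4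
      exact Prod.ext efst esnd
  calc T.card ^ 2 ≤ P.card * ∑ p ∈ P, (fib p).card ^ 2 := hCS
    _ = P.card * D.card := by rw [hDcard]
    _ ≤ P.card * ((T.image fun a => (x a, z a)).card *
        (T.image fun a => (y a, z a)).card) := Nat.mul_le_mul_left _ hDle

set_option maxHeartbeats 1000000 in
/-- The counting bound underlying the fifth lower-bound term
`BCKWH·(RSσwσh/M)^(1/2)`: if every element of `V` satisfies `0 ≤ r < R` and
`0 ≤ s < S` and the three projected images have size at most `M`, then
`|V| ≤ c · (R·S/(σw·σh))^(1/2) · M^(3/2)` with absolute constant `c = 4`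
(accounting for the ceilings of `R/σw` and `S/σh` in the lifting
`r = σw·r' + r''`, `s = σh·s' + s''`). -/
theorem cnn_small_filter_bound_unlifted (σw σh R S : ℤ)
    (hσw : 0 < σw) (hσh : 0 < σh) (hR : 0 < R) (hS : 0 < S)
    (hσwR : σw ≤ R) (hσhS : σh ≤ S)
    (M : ℝ) (hM : 0 ≤ M) (V : Finset Tuple7)
    (hbound : ∀ v ∈ V, 0 ≤ v.2.2.2.2.2.1 ∧ v.2.2.2.2.2.1 < R ∧
      0 ≤ v.2.2.2.2.2.2 ∧ v.2.2.2.2.2.2 < S)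
    (h1 : ((V.image phi1).card : ℝ) ≤ M)
    (h2 : ((V.image (phi2 σw σh)).card : ℝ) ≤ M)
    (h3 : ((V.image phi3).card : ℝ) ≤ M) :
    (V.card : ℝ) ≤
      4 * Real.sqrt (((R : ℝ) * (S : ℝ)) / ((σw : ℝ) * (σh : ℝ))) *
        M ^ ((3 : ℝ) / 2) := by
  classical
  -- slice key and slices
  set key : Tuple7 → ℤ × ℤ :=
    fun v => (v.2.2.2.2.2.1 / σw, v.2.2.2.2.2.2 / σh) with hkeydef
  set P := V.image key with hPdef
  set slice : ℤ × ℤ → Finset Tuple7 := fun p => V.filter (fun v => key v = p) with hslicedef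
  have hVcard : V.card = ∑ p ∈ P, (slice p).card :=
    Finset.card_eq_sum_card_fiberwise (fun v hv => Finset.mem_image_of_mem _ hv)
  set m : ℤ × ℤ → ℕ := fun p => ((slice p).image phi3).card with hmdef
  -- per-slice Loomis–Whitney bound, natural-number form
  have hLW : ∀ p ∈ P, (slice p).card ^ 2 ≤
      (V.image phi1).card * ((V.image (phi2 σw σh)).card * m p) := by
    intro p hp
    have hsub : slice p ⊆ V := Finset.filter_subset _ _
    have hlw := loomis_whitney (slice p)
      (fun v => (v.1, v.2.2.2.1, v.2.2.2.2.1))   -- x = (b, w, h)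
      (fun v => v.2.2.1)                          -- y = k
      (fun v => (v.2.1, v.2.2.2.2.2.1, v.2.2.2.2.2.2))  -- z = (c, r, s)
      (by
        rintro ⟨b,c,k,w,h,r,s⟩ _ ⟨b',c',k',w',h',r',s'⟩ _ hxe hye hze
        simp only [Prod.mk.injEq] at hxe hze ⊢
        exact ⟨hxe.1, hze.1, hye, hxe.2.1, hxe.2.2, hze.2.1, hze.2.2⟩)
    have hA : ((slice p).image fun v =>
        ((v.1, v.2.2.2.1, v.2.2.2.2.1), v.2.2.1)).card ≤ (V.image phi1).card := by
      calc _ ≤ ((slice p).image phi1).card := by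
            apply card_image_le_of_determines
            rintro ⟨b,c,k,w,h,r,s⟩ _ ⟨b',c',k',w',h',r',s'⟩ _ he
            simp only [phi1, Prod.mk.injEq] at he ⊢
            exact ⟨⟨he.1, he.2.2.1, he.2.2.2⟩, he.2.1⟩
        _ ≤ (V.image phi1).card :=
            Finset.card_le_card (Finset.image_subset_image hsub)
    have hB : ((slice p).image fun v =>
        ((v.1, v.2.2.2.1, v.2.2.2.2.1), (v.2.1, v.2.2.2.2.2.1, v.2.2.2.2.2.2))).card ≤
        (V.image (phi2 σw σh)).card := by
      calc _ ≤ ((slice p).image (phi2 σw σh)).card := by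
            apply card_image_le_of_determines
            rintro ⟨b,c,k,w,h,r,s⟩ hv ⟨b',c',k',w',h',r',s'⟩ hv' he
            simp only [hslicedef, hkeydef, Finset.mem_filter, Prod.mk.injEq] at hv hv'
            simp only [phi2, Prod.mk.injEq] at he ⊢
            obtain ⟨hb, hc, hrw, hsh⟩ := he
            have hpp := hv.2.trans hv'.2.symm
            have hrdiv : r / σw = r' / σw := congrArg Prod.fst hpp
            have hsdiv : s / σh = s' / σh := congrArg Prod.snd hpp
            have hrmod : r % σw = r' % σw := by
              have := congrArg (fun t => t % σw) hrw
              simpa [Int.add_mul_emod_self_left] using this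
            have hsmod : s % σh = s' % σh := by
              have := congrArg (fun t => t % σh) hsh
              simpa [Int.add_mul_emod_self_left] using this
            have hr : r = r' := by
              have e1 := Int.mul_ediv_add_emod r σw
              have e2 := Int.mul_ediv_add_emod r' σw
              rw [hrdiv, hrmod] at e1
              omega
            have hs : s = s' := by
              have e1 := Int.mul_ediv_add_emod s σh
              have e2 := Int.mul_ediv_add_emod s' σh
              rw [hsdiv, hsmod] at e1
              omega
            have hw : w = w' := by
              have : σw * w = σw * w' := by omega
              exact mul_left_cancel₀ (ne_of_gt hσw) this
            have hh : h = h' := by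
              have : σh * h = σh * h' := by omega
              exact mul_left_cancel₀ (ne_of_gt hσh) this
            exact ⟨⟨hb, hw, hh⟩, hc, hr, hs⟩
        _ ≤ (V.image (phi2 σw σh)).card :=
            Finset.card_le_card (Finset.image_subset_image hsub)
    have hC : ((slice p).image fun v =>
        (v.2.2.1, (v.2.1, v.2.2.2.2.2.1, v.2.2.2.2.2.2))).card ≤ m p := by
      apply card_image_le_of_determines
      rintro ⟨b,c,k,w,h,r,s⟩ _ ⟨b',c',k',w',h',r',s'⟩ _ he
      simp only [phi3, Prod.mk.injEq] at he ⊢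
      exact ⟨he.2.1, he.1, he.2.2⟩
    calc (slice p).card ^ 2 ≤ _ := hlw
      _ ≤ (V.image phi1).card * ((V.image (phi2 σw σh)).card * m p) := by
          exact Nat.mul_le_mul hA (Nat.mul_le_mul hB hC)
  -- per-slice real bound
  have hslice_le : ∀ p ∈ P, ((slice p).card : ℝ) ≤ M * Real.sqrt (m p) := by
    intro p hp
    have h := hLW p hp
    have hcast : ((slice p).card : ℝ) ^ 2 ≤ M * M * (m p : ℝ) := by
      have := (Nat.cast_le (α := ℝ)).2 h
      push_cast at this
      calc ((slice p).card : ℝ) ^ 2 ≤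
          ((V.image phi1).card : ℝ) * (((V.image (phi2 σw σh)).card : ℝ) * (m p : ℝ)) := this
        _ ≤ M * (M * (m p : ℝ)) := by
            have hmp : (0:ℝ) ≤ (m p : ℝ) := Nat.cast_nonneg _
            have hb2 : (0:ℝ) ≤ (((V.image (phi2 σw σh)).card : ℕ) : ℝ) := Nat.cast_nonneg _
            apply mul_le_mul h1 (mul_le_mul_of_nonneg_right h2 hmp)
              (mul_nonneg hb2 hmp) hM
        _ = M * M * (m p : ℝ) := by ring
    calc ((slice p).card : ℝ) = Real.sqrt (((slice p).card : ℝ) ^ 2) :=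
          (Real.sqrt_sq (Nat.cast_nonneg _)).symm
      _ ≤ Real.sqrt (M * M * (m p : ℝ)) := Real.sqrt_le_sqrt hcast
      _ = Real.sqrt (M * M) * Real.sqrt (m p) := Real.sqrt_mul (mul_nonneg hM hM) _
      _ = M * Real.sqrt (m p) := by rw [Real.sqrt_mul_self hM]
  -- sum of m over slices is at most M
  have hm_sum : (∑ p ∈ P, (m p : ℝ)) ≤ M := by
    have hdisj : ∀ p ∈ P, ∀ q ∈ P, p ≠ q →
        Disjoint ((slice p).image phi3) ((slice q).image phi3) := by
      intro p _ q _ hpq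
      refine Finset.disjoint_left.2 ?_
      intro t htp htq
      simp only [Finset.mem_image, hslicedef, Finset.mem_filter] at htp htq
      obtain ⟨v, ⟨_, hv⟩, rfl⟩ := htp
      obtain ⟨v', ⟨_, hv'⟩, he⟩ := htq
      apply hpq
      rw [← hv, ← hv']
      obtain ⟨b,c,k,w,h,r,s⟩ := v
      obtain ⟨b',c',k',w',h',r',s'⟩ := v'
      simp only [phi3, Prod.mk.injEq] at he
      simp only [hkeydef, Prod.mk.injEq]
      rw [he.2.2.1, he.2.2.2]
      exact ⟨rfl, rfl⟩
    have hnat : (∑ p ∈ P, m p) ≤ (V.image phi3).card := by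
      rw [hmdef, ← Finset.card_biUnion hdisj]
      apply Finset.card_le_card
      apply Finset.biUnion_subset.2
      intro p _
      exact Finset.image_subset_image (Finset.filter_subset _ _)
    calc (∑ p ∈ P, (m p : ℝ)) = ((∑ p ∈ P, m p : ℕ) : ℝ) := by push_cast; ring
      _ ≤ ((V.image phi3).card : ℝ) := Nat.cast_le.2 hnat
      _ ≤ M := h3
  -- bound on the number of slices
  have hP_card : (P.card : ℝ) ≤ (2 * R / σw) * (2 * S / σh) := by
    have hPsub : P ⊆ Finset.Icc 0 ((R - 1) / σw) ×ˢ Finset.Icc 0 ((S - 1) / σh) := by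
      intro t ht
      simp only [hPdef, Finset.mem_image] at ht
      obtain ⟨v, hv, rfl⟩ := ht
      obtain ⟨hr0, hrR, hs0, hsS⟩ := hbound v hv
      simp only [hkeydef, Finset.mem_product, Finset.mem_Icc]
      exact ⟨⟨Int.ediv_nonneg hr0 hσw.le, Int.ediv_le_ediv hσw (by omega)⟩,
        ⟨Int.ediv_nonneg hs0 hσh.le, Int.ediv_le_ediv hσh (by omega)⟩⟩
    have hnat : P.card ≤ ((R - 1) / σw + 1).toNat * ((S - 1) / σh + 1).toNat := by
      calc P.card ≤ _ := Finset.card_le_card hPsub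
        _ = _ := by rw [Finset.card_product, Int.card_Icc, Int.card_Icc]; ring_nf
    have hfac : ∀ X σ : ℤ, 0 < σ → 0 < X → σ ≤ X →
        ((((X - 1) / σ + 1).toNat : ℝ)) ≤ 2 * (X : ℝ) / (σ : ℝ) := by
      intro X σ hσ hX hσX
      have hd0 : 0 ≤ (X - 1) / σ := Int.ediv_nonneg (by omega) hσ.le
      have hσR : (0 : ℝ) < (σ : ℝ) := by exact_mod_cast hσ
      have hmul : σ * ((X - 1) / σ) ≤ X - 1 := by
        have e := Int.mul_ediv_add_emod (X - 1) σ
        have hmod : 0 ≤ (X - 1) % σ := Int.emod_nonneg _ (ne_of_gt hσ)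
        omega
      have hmulR : (σ : ℝ) * (((X - 1) / σ : ℤ) : ℝ) ≤ (X : ℝ) - 1 := by exact_mod_cast hmul
      have hcast : ((((X - 1) / σ + 1).toNat : ℕ) : ℝ) = (((X - 1) / σ : ℤ) : ℝ) + 1 := by
        rw [← Int.cast_natCast, Int.toNat_of_nonneg (by linarith)]
        push_cast
        ring
      rw [hcast, le_div_iff₀ hσR]
      have hσX' : (σ : ℝ) ≤ (X : ℝ) := by exact_mod_cast hσX
      nlinarith [hmulR, hσR, hσX']
    calc (P.card : ℝ) ≤ ((((R - 1) / σw + 1).toNat : ℝ)) * ((((S - 1) / σh + 1).toNat : ℝ)) := by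
          exact_mod_cast hnat
      _ ≤ (2 * R / σw) * (2 * S / σh) := by
          apply mul_le_mul (hfac R σw hσw hR hσwR) (hfac S σh hσh hS hσhS) (by positivity) ?_
          positivity
  -- Cauchy–Schwarz over the slices
  have hCS2 : (∑ p ∈ P, Real.sqrt (m p)) ≤ Real.sqrt ((P.card : ℝ) * M) := by
    have h := sq_sum_le_card_mul_sum_sq (s := P) (f := fun p => Real.sqrt (m p))
    have hsq : ∑ p ∈ P, Real.sqrt (m p) ^ 2 = ∑ p ∈ P, (m p : ℝ) :=
      Finset.sum_congr rfl fun p _ => Real.sq_sqrt (Nat.cast_nonneg _)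
    have h' : (∑ p ∈ P, Real.sqrt (m p)) ^ 2 ≤ (P.card : ℝ) * M := by
      calc (∑ p ∈ P, Real.sqrt (m p)) ^ 2
          ≤ (P.card : ℝ) * ∑ p ∈ P, Real.sqrt (m p) ^ 2 := h
        _ = (P.card : ℝ) * ∑ p ∈ P, (m p : ℝ) := by rw [hsq]
        _ ≤ (P.card : ℝ) * M := mul_le_mul_of_nonneg_left hm_sum (Nat.cast_nonneg _)
    calc (∑ p ∈ P, Real.sqrt (m p))
        = Real.sqrt ((∑ p ∈ P, Real.sqrt (m p)) ^ 2) :=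
          (Real.sqrt_sq (Finset.sum_nonneg fun p _ => Real.sqrt_nonneg _)).symm
      _ ≤ Real.sqrt ((P.card : ℝ) * M) := Real.sqrt_le_sqrt h'
  have hVle : (V.card : ℝ) ≤ M * Real.sqrt ((P.card : ℝ) * M) := by
    calc (V.card : ℝ) = ∑ p ∈ P, ((slice p).card : ℝ) := by rw [hVcard]; push_cast; ring
      _ ≤ ∑ p ∈ P, M * Real.sqrt (m p) := Finset.sum_le_sum hslice_le
      _ = M * ∑ p ∈ P, Real.sqrt (m p) := by rw [Finset.mul_sum]
      _ ≤ M * Real.sqrt ((P.card : ℝ) * M) := mul_le_mul_of_nonneg_left hCS2 hM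
  set Q : ℝ := ((R : ℝ) * (S : ℝ)) / ((σw : ℝ) * (σh : ℝ)) with hQdef
  have hQ : (0 : ℝ) ≤ Q := by
    apply div_nonneg <;> positivity
  have hsqrt4 : Real.sqrt 4 = 2 := by
    rw [show (4 : ℝ) = 2 ^ 2 by norm_num, Real.sqrt_sq (by norm_num)]
  have hsqrt : Real.sqrt ((2 * R / σw) * (2 * S / σh) * M) =
      2 * Real.sqrt Q * Real.sqrt M := by
    have he : (2 * (R : ℝ) / σw) * (2 * (S : ℝ) / σh) * M = 4 * (Q * M) := by
      rw [hQdef]; field_simp; ring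
    rw [he, Real.sqrt_mul (by norm_num : (0:ℝ) ≤ 4), Real.sqrt_mul hQ, hsqrt4]
    ring
  have hM32 : M ^ ((3 : ℝ) / 2) = M * Real.sqrt M := by
    rcases eq_or_lt_of_le hM with h0 | h0
    · rw [← h0, Real.zero_rpow (by norm_num)]
      simp
    · rw [show (3 : ℝ) / 2 = 1 + 1 / 2 by norm_num, Real.rpow_add h0, Real.rpow_one,
        Real.sqrt_eq_rpow]
  calc (V.card : ℝ) ≤ M * Real.sqrt ((P.card : ℝ) * M) := hVle
    _ ≤ M * Real.sqrt ((2 * R / σw) * (2 * S / σh) * M) := by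
        apply mul_le_mul_of_nonneg_left _ hM
        exact Real.sqrt_le_sqrt (mul_le_mul_of_nonneg_right hP_card hM)
    _ = M * (2 * Real.sqrt Q * Real.sqrt M) := by rw [hsqrt]
    _ = 2 * Real.sqrt Q * (M * Real.sqrt M) := by ring
    _ = 2 * Real.sqrt Q * M ^ ((3 : ℝ) / 2) := by rw [hM32]
    _ ≤ 4 * Real.sqrt Q * M ^ ((3 : ℝ) / 2) := by
        have hge : (0 : ℝ) ≤ Real.sqrt Q * M ^ ((3 : ℝ) / 2) :=
          mul_nonneg (Real.sqrt_nonneg _) (Real.rpow_nonneg hM _)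
        nlinarith [hge]
end

section
/- Let A and B be finite sets of subgroups of an abelian group that are independent. Then lattice(A ∪ B) = lattice(A) + lattice(B), where lattice(A) + lattice(B) denotes the set of all subgroups of the form C + D with C ∈ lattice(A) and D ∈ lattice(B). -/
/-- `InSubgroupLattice S H` says that the subgroup `H` belongs to the lattice
of subgroups generated by the collection `S`: the smallest collection of
subgroups containing `S` and the trivial subgroup `⊥ = {0}` that is closed
under pairwise sums (`⊔`) and pairwise intersections (`⊓`). -/
inductive InSubgroupLattice {G : Type*} [AddCommGroup G]
    (S : Set (AddSubgroup G)) : AddSubgroup G → Prop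
  | base : ∀ A ∈ S, InSubgroupLattice S A
  | bot : InSubgroupLattice S ⊥
  | sup : ∀ {A B : AddSubgroup G}, InSubgroupLattice S A →
      InSubgroupLattice S B → InSubgroupLattice S (A ⊔ B)
  | inf : ∀ {A B : AddSubgroup G}, InSubgroupLattice S A →
      InSubgroupLattice S B → InSubgroupLattice S (A ⊓ B)

lemma InSubgroupLattice.mono {G : Type*} [AddCommGroup G]
    {S T : Set (AddSubgroup G)} (hST : S ⊆ T) {H : AddSubgroup G}
    (h : InSubgroupLattice S H) : InSubgroupLattice T H := by
  induction h with
  | base X hX => exact .base X (hST hX)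
  | bot => exact .bot
  | sup _ _ ih1 ih2 => exact .sup ih1 ih2
  | inf _ _ ih1 ih2 => exact .inf ih1 ih2

lemma InSubgroupLattice.le_sup {G : Type*} [AddCommGroup G]
    (A : Finset (AddSubgroup G)) {H : AddSubgroup G}
    (h : InSubgroupLattice (↑A : Set (AddSubgroup G)) H) : H ≤ A.sup id := by
  induction h with
  | base X hX => exact Finset.le_sup (f := id) hX
  | bot => exact bot_le
  | sup _ _ ih1 ih2 => exact sup_le ih1 ih2
  | inf _ _ ih1 _ => exact le_trans inf_le_left ih1

lemma indep_inf_sup {G : Type*} [AddCommGroup G]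
    {X Y C₁ C₂ D₁ D₂ : AddSubgroup G}
    (hindep : X ⊓ Y = ⊥)
    (hC₁ : C₁ ≤ X) (hC₂ : C₂ ≤ X) (hD₁ : D₁ ≤ Y) (hD₂ : D₂ ≤ Y) :
    (C₁ ⊔ D₁) ⊓ (C₂ ⊔ D₂) = (C₁ ⊓ C₂) ⊔ (D₁ ⊓ D₂) := by
  apply le_antisymm
  · intro g hg
    have hg' : g ∈ (C₁ ⊔ D₁) ⊓ (C₂ ⊔ D₂) := hg
    rw [AddSubgroup.mem_inf] at hg'
    obtain ⟨c₁, hc₁, d₁, hd₁, rfl⟩ := AddSubgroup.mem_sup.mp hg'.1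
    obtain ⟨c₂, hc₂, d₂, hd₂, heq⟩ := AddSubgroup.mem_sup.mp hg'.2
    have hkey : c₁ - c₂ = d₂ - d₁ := by
      have := heq
      abel_nf
      abel_nf at this
      linear_combination (norm := abel) -this
    have hbot : c₁ - c₂ ∈ X ⊓ Y := AddSubgroup.mem_inf.mpr
      ⟨sub_mem (hC₁ hc₁) (hC₂ hc₂), hkey ▸ sub_mem (hD₂ hd₂) (hD₁ hd₁)⟩
    rw [hindep, AddSubgroup.mem_bot, sub_eq_zero] at hbot
    have hd : d₁ = d₂ := by
      have := hkey
      rw [hbot, sub_self] at this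
      exact (sub_eq_zero.mp this.symm).symm
    show c₁ + d₁ ∈ (C₁ ⊓ C₂) ⊔ (D₁ ⊓ D₂)
    rw [AddSubgroup.mem_sup]
    exact ⟨c₁, AddSubgroup.mem_inf.mpr ⟨hc₁, hbot ▸ hc₂⟩, d₁, AddSubgroup.mem_inf.mpr ⟨hd₁, hd ▸ hd₂⟩, rfl⟩
  · exact sup_le (le_inf (le_trans inf_le_left le_sup_left)
      (le_trans inf_le_right le_sup_left))
      (le_inf (le_trans inf_le_left le_sup_right)
      (le_trans inf_le_right le_sup_right))

/-- If `A` and `B` are independent finite sets of subgroups of an abelian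
group (i.e. `(∑ A_i) ∩ (∑ B_j) = {0}`), then
`lattice(A ∪ B) = lattice(A) + lattice(B)
  = {C + D : C ∈ lattice(A), D ∈ lattice(B)}`. -/
theorem lattice_of_independent_union {G : Type*} [AddCommGroup G]
    [DecidableEq (AddSubgroup G)]
    (A B : Finset (AddSubgroup G))
    (hindep : A.sup id ⊓ B.sup id = ⊥) :
    {H : AddSubgroup G | InSubgroupLattice (↑(A ∪ B) : Set (AddSubgroup G)) H} =
      {H : AddSubgroup G | ∃ C D : AddSubgroup G,
        InSubgroupLattice (↑A : Set (AddSubgroup G)) C ∧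
        InSubgroupLattice (↑B : Set (AddSubgroup G)) D ∧ H = C ⊔ D} := by
  ext H
  simp only [Set.mem_setOf_eq]
  constructor
  · intro h
    induction h with
    | base X hX =>
      rw [Finset.coe_union, Set.mem_union] at hX
      rcases hX with hX | hX
      · exact ⟨X, ⊥, .base X hX, .bot, (sup_bot_eq X).symm⟩
      · exact ⟨⊥, X, .bot, .base X hX, (bot_sup_eq X).symm⟩
    | bot => exact ⟨⊥, ⊥, .bot, .bot, (sup_bot_eq ⊥).symm⟩
    | sup _ _ ih1 ih2 =>
      obtain ⟨C₁, D₁, hC₁, hD₁, rfl⟩ := ih1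
      obtain ⟨C₂, D₂, hC₂, hD₂, rfl⟩ := ih2
      exact ⟨C₁ ⊔ C₂, D₁ ⊔ D₂, .sup hC₁ hC₂, .sup hD₁ hD₂, by
        rw [sup_sup_sup_comm]⟩
    | inf _ _ ih1 ih2 =>
      obtain ⟨C₁, D₁, hC₁, hD₁, rfl⟩ := ih1
      obtain ⟨C₂, D₂, hC₂, hD₂, rfl⟩ := ih2
      exact ⟨C₁ ⊓ C₂, D₁ ⊓ D₂, .inf hC₁ hC₂, .inf hD₁ hD₂,
        indep_inf_sup hindep (hC₁.le_sup A) (hC₂.le_sup A)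
          (hD₁.le_sup B) (hD₂.le_sup B)⟩
  · rintro ⟨C, D, hC, hD, rfl⟩
    have hsub : (↑A : Set (AddSubgroup G)) ⊆ ↑(A ∪ B) := by
      rw [Finset.coe_union]; exact Set.subset_union_left
    have hsub' : (↑B : Set (AddSubgroup G)) ⊆ ↑(A ∪ B) := by
      rw [Finset.coe_union]; exact Set.subset_union_right
    exact .sup (hC.mono hsub) (hD.mono hsub')
end

section
/- (Feasibility in Upper Bound Case 2.1.) Let B, C, K, W, H, R, S, M be real numbers, each at least 1, with R ≤ W and S ≤ H. If RS ≥ M, then there exists an admissible tiling (bB, bC, bK, bW, bH, bR, bS) whose product satisfies bB·bC·bK·bW·bH·bR·bS ≥ M^2; consequently the blocked algorithm performs O(KCHWRSB·M / M^2) = O(KCHWRSB/M) reads and writes, matching the lower bound KCHWB·RS/M. -/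
/-- An admissible tiling for the stride-1 CNN with parameters
`B, C, K, W, H, R, S` and fast-memory size `M`: block sizes between 1 and the
corresponding loop bound, with `bR ≤ bW`, `bS ≤ bH`, and the three memory
constraints (the tiles of `Out`, `Image`, and `Filter` fit in fast memory). -/
def AdmissibleTiling (B C K W H R S M bB bC bK bW bH bR bS : ℝ) : Prop :=
  1 ≤ bB ∧ bB ≤ B ∧ 1 ≤ bC ∧ bC ≤ C ∧ 1 ≤ bK ∧ bK ≤ K ∧
  1 ≤ bW ∧ bW ≤ W ∧ 1 ≤ bH ∧ bH ≤ H ∧ 1 ≤ bR ∧ bR ≤ R ∧ 1 ≤ bS ∧ bS ≤ S ∧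
  bR ≤ bW ∧ bS ≤ bH ∧
  bK * bH * bW * bB ≤ M ∧ bC * bH * bW * bB ≤ M ∧ bK * bR * bS * bC ≤ M

/-- Feasibility in Upper Bound Case 2.1: if `RS ≥ M`, there exists an
admissible tiling whose block product is at least `M²`, so the blocked
algorithm performs `O(KCHWRSB·M/M²) = O(KCHWRSB/M)` reads and writes,
matching the lower bound `KCHWB·RS/M`. -/
theorem case_2_1_feasible (B C K W H R S M : ℝ)
    (hB : 1 ≤ B) (hC : 1 ≤ C) (hK : 1 ≤ K) (hW : 1 ≤ W) (hH : 1 ≤ H)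
    (hR : 1 ≤ R) (hS : 1 ≤ S) (hM : 1 ≤ M) (hRW : R ≤ W) (hSH : S ≤ H)
    (hRS : M ≤ R * S) :
    ∃ bB bC bK bW bH bR bS : ℝ,
      AdmissibleTiling B C K W H R S M bB bC bK bW bH bR bS ∧
      M ^ 2 ≤ bB * bC * bK * bW * bH * bR * bS := by
  have hR0 : (0:ℝ) < R := lt_of_lt_of_le one_pos hR
  rcases le_total R M with h | h
  · -- bR = bW = R, bS = bH = M/R
    refine ⟨1, 1, 1, R, M / R, R, M / R, ?_, ?_⟩
    · have h1 : 1 ≤ M / R := (one_le_div hR0).mpr h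
      have h2 : M / R ≤ S := (div_le_iff₀ hR0).mpr (by nlinarith)
      refine ⟨le_refl 1, hB, le_refl 1, hC, le_refl 1, hK, hR, hRW,
        h1, le_trans h2 hSH, hR, le_refl R, h1, h2, le_refl R, le_refl _,
        ?_, ?_, ?_⟩ <;>
      · nlinarith [div_mul_cancel₀ M (ne_of_gt hR0)]
    · have : R * (M / R) = M := by field_simp
      nlinarith [sq_nonneg M]
  · -- bR = bW = M, bS = bH = 1
    refine ⟨1, 1, 1, M, 1, M, 1, ?_, ?_⟩
    · exact ⟨le_refl 1, hB, le_refl 1, hC, le_refl 1, hK, hM, le_trans h hRW,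
        le_refl 1, hH, hM, h, le_refl 1, hS, le_refl M, le_refl 1,
        by linarith, by linarith, by linarith⟩
    · nlinarith
end

section
/- (Dominance in Upper Bound Case 2.2.1.) Let B, C, K, W, H, R, S, M be real numbers, each at least 1, with R ≤ W and S ≤ H. If CHWB ≥ M, KHWB ≥ M, RS ≤ M, and M·RS ≥ (HWB)^2, then KCRS ≥ KHWB, KCRS ≥ CHWB, KCRS ≥ KCHWB·RS/M, and KCRS ≥ KCHWB·(RS/M)^(1/2); that is, LB = KCRS. -/
/-- Dominance in Upper Bound Case 2.2.1: for stride-1 CNN parameters each at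
least 1 with `R ≤ W`, `S ≤ H`, if `CHWB ≥ M`, `KHWB ≥ M`, `RS ≤ M`, and
`M·RS ≥ (HWB)²`, then the term `KCRS` dominates the other four terms of the
communication lower bound, so `LB = KCRS`. -/
theorem case_2_2_1_dominance (B C K W H R S M : ℝ)
    (hB : 1 ≤ B) (hC : 1 ≤ C) (hK : 1 ≤ K) (hW : 1 ≤ W) (hH : 1 ≤ H)
    (hR : 1 ≤ R) (hS : 1 ≤ S) (hM : 1 ≤ M) (hRW : R ≤ W) (hSH : S ≤ H)
    (h1 : M ≤ C * H * W * B) (h2 : M ≤ K * H * W * B)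
    (h3 : R * S ≤ M) (h4 : (H * W * B) ^ 2 ≤ M * (R * S)) :
    K * H * W * B ≤ K * C * R * S ∧
    C * H * W * B ≤ K * C * R * S ∧
    K * C * H * W * B * R * S / M ≤ K * C * R * S ∧
    K * C * H * W * B * Real.sqrt (R * S / M) ≤ K * C * R * S ∧
    max (max (max (max (K * H * W * B) (C * H * W * B)) (K * C * R * S))
          (K * C * H * W * B * R * S / M))
        (K * C * H * W * B * Real.sqrt (R * S / M)) =
      K * C * R * S := by
  have hB0 : (0:ℝ) < B := by linarith
  have hC0 : (0:ℝ) < C := by linarith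
  have hK0 : (0:ℝ) < K := by linarith
  have hW0 : (0:ℝ) < W := by linarith
  have hH0 : (0:ℝ) < H := by linarith
  have hR0 : (0:ℝ) < R := by linarith
  have hS0 : (0:ℝ) < S := by linarith
  have hM0 : (0:ℝ) < M := by linarith
  have hHWB0 : (0:ℝ) < H * W * B := by positivity
  have hHWBM : H * W * B ≤ M := by nlinarith
  have hCRS : H * W * B ≤ C * (R * S) := by
    nlinarith [mul_le_mul_of_nonneg_right h1 (mul_nonneg hR0.le hS0.le)]
  have hKRS : H * W * B ≤ K * (R * S) := by
    nlinarith [mul_le_mul_of_nonneg_right h2 (mul_nonneg hR0.le hS0.le)]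
  have g1 : K * H * W * B ≤ K * C * R * S := by
    nlinarith [mul_le_mul_of_nonneg_left hCRS hK0.le]
  have g2 : C * H * W * B ≤ K * C * R * S := by
    nlinarith [mul_le_mul_of_nonneg_left hKRS hC0.le]
  have g3 : K * C * H * W * B * R * S / M ≤ K * C * R * S := by
    rw [div_le_iff₀ hM0]; nlinarith
  have g4 : K * C * H * W * B * Real.sqrt (R * S / M) ≤ K * C * R * S := by
    have hs : Real.sqrt (R * S / M) ≤ R * S / (H * W * B) := by
      rw [show R * S / (H * W * B) = Real.sqrt ((R * S / (H * W * B))^2) from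
        (Real.sqrt_sq (by positivity)).symm]
      apply Real.sqrt_le_sqrt
      rw [div_pow, div_le_div_iff₀ hM0 (by positivity)]
      nlinarith
    calc K * C * H * W * B * Real.sqrt (R * S / M)
        ≤ K * C * H * W * B * (R * S / (H * W * B)) := by
          apply mul_le_mul_of_nonneg_left hs (by positivity)
      _ = K * C * R * S := by field_simp
  refine ⟨g1, g2, g3, g4, ?_⟩
  rw [max_eq_right (max_le g1 g2), max_eq_left g3, max_eq_left g4]
end

section
/- (Feasibility in Upper Bound Case 2.2.1.) Let B, C, K, W, H, R, S, M be real numbers, each at least 1, with R ≤ W and S ≤ H. If CHWB ≥ M, KHWB ≥ M, RS ≤ M, and M·RS ≥ (HWB)^2, then the choice bC = M/(HWB), bK = HWB/(RS), bB = B, bH = H, bW = W, bR = R, bS = S is an admissible tiling whose product satisfies bB·bC·bK·bW·bH·bR·bS = HWB·M; consequently the blocked algorithm performs O(KCHWRSB·M/(HWBM)) = O(KCRS) reads and writes, matching the lower bound KCRS. -/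
/-- Feasibility in Upper Bound Case 2.2.1: if `CHWB ≥ M`, `KHWB ≥ M`,
`RS ≤ M`, and `M·RS ≥ (HWB)²`, then the tiling
`bC = M/(HWB)`, `bK = HWB/(RS)`, `bB = B`, `bH = H`, `bW = W`, `bR = R`,
`bS = S` is admissible and its block product equals `HWB·M`, so the blocked
algorithm performs `O(KCHWRSB·M/(HWBM)) = O(KCRS)` reads and writes,
matching the lower bound `KCRS`. -/
theorem case_2_2_1_feasible (B C K W H R S M : ℝ)
    (hB : 1 ≤ B) (hC : 1 ≤ C) (hK : 1 ≤ K) (hW : 1 ≤ W) (hH : 1 ≤ H)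
    (hR : 1 ≤ R) (hS : 1 ≤ S) (hM : 1 ≤ M) (hRW : R ≤ W) (hSH : S ≤ H)
    (h1 : M ≤ C * H * W * B) (h2 : M ≤ K * H * W * B)
    (h3 : R * S ≤ M) (h4 : (H * W * B) ^ 2 ≤ M * (R * S)) :
    AdmissibleTiling B C K W H R S M
      B (M / (H * W * B)) (H * W * B / (R * S)) W H R S ∧
    B * (M / (H * W * B)) * (H * W * B / (R * S)) * W * H * R * S =
      H * W * B * M := by
  have hHW : (1:ℝ) ≤ H * W := by nlinarith
  have hHWB : (1:ℝ) ≤ H * W * B := by nlinarith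
  have hHWBpos : (0:ℝ) < H * W * B := by linarith
  have hRS : (1:ℝ) ≤ R * S := by nlinarith
  have hRSpos : (0:ℝ) < R * S := by linarith
  have hHWBM : H * W * B ≤ M := by nlinarith
  have hSRHW : S * R ≤ H * W := mul_le_mul hSH hRW (by linarith) (by linarith)
  have hRSHWB : R * S ≤ H * W * B := by nlinarith
  have hHWBK : H * W * B ≤ K * (R * S) := by nlinarith
  refine ⟨⟨hB, le_refl B, ?_, ?_, ?_, ?_,
    hW, le_refl W, hH, le_refl H, hR, le_refl R, hS, le_refl S, hRW, hSH,
    ?_, ?_, ?_⟩, ?_⟩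
  · rw [le_div_iff₀ hHWBpos]; linarith
  · rw [div_le_iff₀ hHWBpos]; nlinarith
  · rw [le_div_iff₀ hRSpos]; linarith
  · rw [div_le_iff₀ hRSpos]; linarith
  · rw [div_mul_eq_mul_div, div_mul_eq_mul_div, div_mul_eq_mul_div,
      div_le_iff₀ hRSpos]; nlinarith
  · rw [div_mul_eq_mul_div, div_mul_eq_mul_div, div_mul_eq_mul_div,
      div_le_iff₀ hHWBpos]; nlinarith
  · have h : H * W * B / (R * S) * R * S * (M / (H * W * B)) = M := by
      field_simp
    rw [h]
  · field_simp
end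

section
/- (Feasibility in Upper Bound Case 2.2.2.1.) Let B, C, K, W, H, R, S, M be real numbers, each at least 1, with R ≤ W and S ≤ H. If RS ≤ M, M·RS ≤ (HWB)^2, K ≥ (M/(RS))^(1/2), and C ≥ (M/(RS))^(1/2), then there exists an admissible tiling (bB, bC, bK, bW, bH, bR, bS) with bK = bC = (M/(RS))^(1/2), bR = R, bS = S, S ≤ bH ≤ H, R ≤ bW ≤ W, 1 ≤ bB ≤ B, and bH·bW·bB = (M·RS)^(1/2), whose product satisfies bB·bC·bK·bW·bH·bR·bS = M^(3/2)·(RS)^(1/2); consequently the blocked algorithm performs O(KCHWRSB·M/(M^(3/2)(RS)^(1/2))) = O(KCHWB·(RS/M)^(1/2)) reads and writes, matching the lower bound KCHWB·(RS/M)^(1/2). -/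
/-- Feasibility in Upper Bound Case 2.2.2.1: if `RS ≤ M`, `M·RS ≤ (HWB)²`,
`K ≥ (M/(RS))^(1/2)`, and `C ≥ (M/(RS))^(1/2)`, then there is an admissible
tiling with `bK = bC = (M/(RS))^(1/2)`, `bR = R`, `bS = S`, `S ≤ bH ≤ H`,
`R ≤ bW ≤ W`, `1 ≤ bB ≤ B`, and `bH·bW·bB = (M·RS)^(1/2)`, whose block
product equals `M^(3/2)·(RS)^(1/2)`; hence the blocked algorithm performs
`O(KCHWRSB·M/(M^(3/2)(RS)^(1/2))) = O(KCHWB·(RS/M)^(1/2))` reads and writes,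
matching the lower bound `KCHWB·(RS/M)^(1/2)`. -/
theorem case_2_2_2_1_feasible (B C K W H R S M : ℝ)
    (hB : 1 ≤ B) (hC : 1 ≤ C) (hK : 1 ≤ K) (hW : 1 ≤ W) (hH : 1 ≤ H)
    (hR : 1 ≤ R) (hS : 1 ≤ S) (hM : 1 ≤ M) (hRW : R ≤ W) (hSH : S ≤ H)
    (h1 : R * S ≤ M) (h2 : M * (R * S) ≤ (H * W * B) ^ 2)
    (h3 : Real.sqrt (M / (R * S)) ≤ K) (h4 : Real.sqrt (M / (R * S)) ≤ C) :
    ∃ bB bH bW : ℝ,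
      1 ≤ bB ∧ bB ≤ B ∧ S ≤ bH ∧ bH ≤ H ∧ R ≤ bW ∧ bW ≤ W ∧
      bH * bW * bB = Real.sqrt (M * (R * S)) ∧
      AdmissibleTiling B C K W H R S M
        bB (Real.sqrt (M / (R * S))) (Real.sqrt (M / (R * S))) bW bH R S ∧
      bB * Real.sqrt (M / (R * S)) * Real.sqrt (M / (R * S)) * bW * bH * R * S =
        M ^ ((3 : ℝ) / 2) * Real.sqrt (R * S) := by
  have hRpos : (0:ℝ) < R := lt_of_lt_of_le one_pos hR
  have hSpos : (0:ℝ) < S := lt_of_lt_of_le one_pos hS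
  have hMpos : (0:ℝ) < M := lt_of_lt_of_le one_pos hM
  have hPpos : (0:ℝ) < R * S := mul_pos hRpos hSpos
  have hP1 : (1:ℝ) ≤ R * S := one_le_mul_of_one_le_of_one_le hR hS
  set T := Real.sqrt (M * (R * S)) with hTdef
  have hTpos : 0 < T := Real.sqrt_pos.mpr (mul_pos hMpos hPpos)
  have hT2 : T ^ 2 = M * (R * S) := Real.sq_sqrt (le_of_lt (mul_pos hMpos hPpos))
  have hPT : R * S ≤ T := by
    rw [hTdef, show M * (R * S) = (R*S) * (M) by ring]
    calc R * S = Real.sqrt ((R*S)*(R*S)) := by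
          rw [Real.sqrt_mul_self hPpos.le]
      _ ≤ Real.sqrt ((R*S)*M) := Real.sqrt_le_sqrt (by nlinarith)
  have hTHWB : T ≤ H * W * B := by
    calc T ≤ Real.sqrt ((H*W*B)^2) := Real.sqrt_le_sqrt h2
      _ = H * W * B := Real.sqrt_sq (by positivity)
  -- construct bH
  have hbHdef : S ≤ min H (T / R) := by
    refine le_min hSH ?_
    rw [le_div_iff₀ hRpos]
    nlinarith
  set bH := min H (T / R) with hbH
  have hbHpos : 0 < bH := lt_of_lt_of_le (lt_of_lt_of_le one_pos hS) hbHdef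
  set T' := T / bH with hT'
  have hT'pos : 0 < T' := div_pos hTpos hbHpos
  have hRT' : R ≤ T' := by
    rw [hT', le_div_iff₀ hbHpos]
    have : bH ≤ T / R := min_le_right _ _
    calc R * bH ≤ R * (T / R) := by nlinarith
      _ = T := by field_simp
  have hT'WB : T' ≤ W * B := by
    rcases le_total H (T / R) with h | h
    · have : bH = H := min_eq_left h
      rw [hT', this, div_le_iff₀ (lt_of_lt_of_le one_pos hH)]
      nlinarith
    · have hbHeq : bH = T / R := min_eq_right h
      have : T' = R := by rw [hT', hbHeq]; field_simp
      rw [this]; nlinarith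
  set bW := min W T' with hbW
  have hbWR : R ≤ bW := le_min hRW hRT'
  have hbWpos : 0 < bW := lt_of_lt_of_le hRpos hbWR
  set bB := T' / bW with hbB
  have hbB1 : 1 ≤ bB := (one_le_div hbWpos).mpr (min_le_right _ _)
  have hbBB : bB ≤ B := by
    rcases le_total W T' with h | h
    · have : bW = W := min_eq_left h
      rw [hbB, this, div_le_iff₀ (lt_of_lt_of_le one_pos hW)]
      rw [mul_comm]
      exact hT'WB
    · have : bW = T' := min_eq_right h
      rw [hbB, this, div_self hT'pos.ne']
      exact hB
  have hprod : bH * bW * bB = T := by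
    rw [hbB, hT']
    field_simp
  -- key sqrt identities
  have hsQ : Real.sqrt (M / (R * S)) * T = M := by
    rw [hTdef, ← Real.sqrt_mul (by positivity) (M * (R * S))]
    rw [show M / (R * S) * (M * (R * S)) = M ^ 2 by field_simp]
    exact Real.sqrt_sq hMpos.le
  have hsK1 : 1 ≤ Real.sqrt (M / (R * S)) := by
    rw [show (1:ℝ) = Real.sqrt 1 by simp]
    exact Real.sqrt_le_sqrt ((le_div_iff₀ hPpos).mpr (by linarith))
  have hsQ2 : Real.sqrt (M / (R * S)) ^ 2 = M / (R * S) :=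
    Real.sq_sqrt (by positivity)
  refine ⟨bB, bH, bW, hbB1, hbBB, hbHdef, min_le_left _ _, hbWR, min_le_left _ _,
    hprod, ⟨hbB1, hbBB, hsK1, h4, hsK1, h3, le_trans hR hbWR, min_le_left _ _,
      le_trans hS hbHdef, min_le_left _ _, hR, le_refl R, hS, le_refl S,
      hbWR, hbHdef, ?_, ?_, ?_⟩, ?_⟩
  · calc Real.sqrt (M / (R*S)) * bH * bW * bB = Real.sqrt (M / (R*S)) * T := by
          rw [← hprod]; ring
      _ ≤ M := le_of_eq hsQ
  · calc Real.sqrt (M / (R*S)) * bH * bW * bB = Real.sqrt (M / (R*S)) * T := by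
          rw [← hprod]; ring
      _ ≤ M := le_of_eq hsQ
  · have hQRS : (M / (R * S)) * (R * S) = M := div_mul_cancel₀ _ hPpos.ne'
    have heq : Real.sqrt (M / (R * S)) * R * S * Real.sqrt (M / (R * S)) = M := by
      linear_combination (R * S) * hsQ2 + hQRS
    exact le_of_eq heq
  · have h32 : M ^ ((3:ℝ)/2) = M * Real.sqrt M := by
      rw [show (3:ℝ)/2 = 1 + 1/2 by norm_num, Real.rpow_add hMpos, Real.rpow_one,
        ← Real.sqrt_eq_rpow]
    have hTsplit : T = Real.sqrt M * Real.sqrt (R * S) := Real.sqrt_mul hMpos.le _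
    calc bB * Real.sqrt (M / (R*S)) * Real.sqrt (M / (R*S)) * bW * bH * R * S
        = (Real.sqrt (M / (R*S)) * (bH * bW * bB)) * (Real.sqrt (M / (R*S)) * (R * S)) := by
          ring
      _ = (Real.sqrt (M / (R*S)) * T) * (Real.sqrt (M / (R*S)) * (R * S)) := by rw [hprod]
      _ = M * (Real.sqrt (M / (R*S)) * (R * S)) := by rw [hsQ]
      _ = M ^ ((3:ℝ)/2) * Real.sqrt (R * S) := by
          have hsP : Real.sqrt (R*S) * Real.sqrt (R*S) = R*S :=
            Real.mul_self_sqrt hPpos.le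
          have hne : Real.sqrt (R*S) ≠ 0 := ne_of_gt (Real.sqrt_pos.mpr hPpos)
          have hkey : Real.sqrt (M / (R*S)) * (R * S) = Real.sqrt M * Real.sqrt (R * S) := by
            calc Real.sqrt (M / (R*S)) * (R * S)
                = Real.sqrt (M / (R*S)) * (Real.sqrt (R*S) * Real.sqrt (R*S)) := by
                  rw [hsP]
              _ = (Real.sqrt (M / (R*S)) * Real.sqrt (R*S)) * Real.sqrt (R*S) := by ring
              _ = Real.sqrt ((M / (R*S)) * (R*S)) * Real.sqrt (R*S) := by
                  rw [← Real.sqrt_mul (by positivity : (0:ℝ) ≤ M / (R*S)) (R*S)]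
              _ = Real.sqrt M * Real.sqrt (R*S) := by
                  rw [div_mul_cancel₀ _ hPpos.ne']
          rw [hkey, h32]; ring
end

section
/- (Feasibility in Upper Bound Case 2.2.2.2.) Let B, C, K, W, H, R, S, M be real numbers, each at least 1, with R ≤ W and S ≤ H. If C ≤ K, C ≤ (M/(RS))^(1/2), RS ≤ M, and CHWB ≥ M, then there exists an admissible tiling (bB, bC, bK, bW, bH, bR, bS) with bC = bK = C, bR = R, bS = S, S ≤ bH ≤ H, R ≤ bW ≤ W, 1 ≤ bB ≤ B, and bH·bW·bB = M/C, whose product satisfies bB·bC·bK·bW·bH·bR·bS = C·RS·M; consequently the blocked algorithm performs O(KCHWRSB·M/(CRSM)) = O(KHWB) reads and writes, matching the lower bound max(KHWB, CHWB). -/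
/-- Feasibility in Upper Bound Case 2.2.2.2: if `C ≤ K`,
`C ≤ (M/(RS))^(1/2)`, `RS ≤ M`, and `CHWB ≥ M`, then there is an admissible
tiling with `bC = bK = C`, `bR = R`, `bS = S`, `S ≤ bH ≤ H`, `R ≤ bW ≤ W`,
`1 ≤ bB ≤ B`, and `bH·bW·bB = M/C`, whose block product equals `C·RS·M`;
hence the blocked algorithm performs `O(KCHWRSB·M/(CRSM)) = O(KHWB)` reads
and writes, matching the lower bound `max(KHWB, CHWB)`. -/
theorem case_2_2_2_2_feasible (B C K W H R S M : ℝ)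
    (hB : 1 ≤ B) (hC : 1 ≤ C) (hK : 1 ≤ K) (hW : 1 ≤ W) (hH : 1 ≤ H)
    (hR : 1 ≤ R) (hS : 1 ≤ S) (hM : 1 ≤ M) (hRW : R ≤ W) (hSH : S ≤ H)
    (hCK : C ≤ K) (hCsmall : C ≤ Real.sqrt (M / (R * S)))
    (h1 : R * S ≤ M) (h2 : M ≤ C * H * W * B) :
    ∃ bB bH bW : ℝ,
      1 ≤ bB ∧ bB ≤ B ∧ S ≤ bH ∧ bH ≤ H ∧ R ≤ bW ∧ bW ≤ W ∧
      bH * bW * bB = M / C ∧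
      AdmissibleTiling B C K W H R S M bB C C bW bH R S ∧
      bB * C * C * bW * bH * R * S = C * (R * S) * M := by
  have hR0 : (0:ℝ) < R := by linarith
  have hS0 : (0:ℝ) < S := by linarith
  have hC0 : (0:ℝ) < C := by linarith
  have hRS0 : (0:ℝ) < R * S := by positivity
  have hM0 : (0:ℝ) < M := by linarith
  have hsq : C * C ≤ M / (R * S) := by
    have h := mul_self_le_mul_self (by linarith) hCsmall
    rwa [Real.mul_self_sqrt (by positivity)] at h
  have hC2RS : C * C * (R * S) ≤ M := (le_div_iff₀ hRS0).mp hsq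
  set T : ℝ := M / C with hT
  have hT0 : 0 < T := by positivity
  have hTRS : R * S ≤ T := by
    rw [hT, le_div_iff₀ hC0]; nlinarith
  have hTHWB : T ≤ H * W * B := by
    rw [hT, div_le_iff₀ hC0]; nlinarith
  have hRS1 : (1:ℝ) ≤ R * S := by nlinarith
  set bB : ℝ := min B (T / (R * S)) with hbBdef
  have hbB1 : 1 ≤ bB := le_min hB (by rw [le_div_iff₀ hRS0]; linarith)
  have hbB0 : (0:ℝ) < bB := by linarith
  have hbBB : bB ≤ B := min_le_left _ _
  have hbBr : bB ≤ T / (R * S) := min_le_right _ _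
  set T' : ℝ := T / bB with hT'def
  have hT'0 : 0 < T' := by positivity
  have hT'RS : R * S ≤ T' := by
    rw [hT'def, le_div_iff₀ hbB0]
    have := mul_le_mul_of_nonneg_left hbBr (le_of_lt hRS0)
    rwa [mul_div_cancel₀ _ (ne_of_gt hRS0)] at this
  have hT'HW : T' ≤ H * W := by
    rw [hT'def, div_le_iff₀ hbB0]
    rcases min_cases B (T / (R * S)) with ⟨he, _⟩ | ⟨he, _⟩
    · rw [hbBdef, he]; linarith [hTHWB]
    · rw [hbBdef, he]
      rw [div_le_iff₀ hC0] at hTHWB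
      have hHWRS : R * S ≤ H * W := by nlinarith
      calc T = R * S * (T / (R * S)) := by
              rw [mul_div_cancel₀ _ (ne_of_gt hRS0)]
        _ ≤ H * W * (T / (R * S)) := by
              apply mul_le_mul_of_nonneg_right hHWRS; positivity
  set bW : ℝ := min W (T' / S) with hbWdef
  have hbWR : R ≤ bW := le_min hRW (by rw [le_div_iff₀ hS0]; linarith)
  have hbWW : bW ≤ W := min_le_left _ _
  have hbWr : bW ≤ T' / S := min_le_right _ _
  have hbW0 : (0:ℝ) < bW := lt_of_lt_of_le hR0 hbWR
  set bH : ℝ := T' / bW with hbHdef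
  have hbH0 : 0 < bH := by positivity
  have hbHS : S ≤ bH := by
    rw [hbHdef, le_div_iff₀ hbW0]
    have := mul_le_mul_of_nonneg_left hbWr (le_of_lt hS0)
    rwa [mul_div_cancel₀ _ (ne_of_gt hS0)] at this
  have hbHH : bH ≤ H := by
    rw [hbHdef, div_le_iff₀ hbW0]
    rcases min_cases W (T' / S) with ⟨he, _⟩ | ⟨he, _⟩
    · rw [hbWdef, he]; linarith
    · rw [hbWdef, he]
      calc T' = S * (T' / S) := by rw [mul_div_cancel₀ _ (ne_of_gt hS0)]
        _ ≤ H * (T' / S) := by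
              apply mul_le_mul_of_nonneg_right hSH; positivity
  have hprod : bH * bW * bB = T := by
    rw [hbHdef, div_mul_cancel₀ _ (ne_of_gt hbW0), hT'def,
      div_mul_cancel₀ _ (ne_of_gt hbB0)]
  have hCT : C * (bH * bW * bB) = M := by
    rw [hprod, hT, mul_div_cancel₀ _ (ne_of_gt hC0)]
  refine ⟨bB, bH, bW, hbB1, hbBB, hbHS, hbHH, hbWR, hbWW, hprod,
    ⟨hbB1, hbBB, hC, le_refl C, hC, hCK, by linarith, hbWW, by linarith, hbHH,
      hR, le_refl R, hS, le_refl S, hbWR, hbHS,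
      le_of_eq (by rw [show C * bH * bW * bB = C * (bH * bW * bB) from by ring, hCT]),
      le_of_eq (by rw [show C * bH * bW * bB = C * (bH * bW * bB) from by ring, hCT]),
      by rw [show C * R * S * C = C * C * (R * S) from by ring]; exact hC2RS⟩, ?_⟩
  have : bB * C * C * bW * bH * R * S = C * (R * S) * (C * (bH * bW * bB)) := by
    ring
  rw [this, hCT]
end

section
/- (Dominance in Upper Bound Case 1.) Let B, C, K, W, H, R, S, M be real numbers, each at least 1. If KCRS ≤ M, then KCHWB·RS/M ≤ KCHWB·(RS/M)^(1/2) ≤ (KC)^(1/2)·HWB ≤ max(KHWB, CHWB); consequently LB = max(KHWB, CHWB, KCRS). -/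
/-- Dominance in Upper Bound Case 1: for stride-1 CNN parameters each at
least 1, if `KCRS ≤ M` then
`KCHWB·RS/M ≤ KCHWB·(RS/M)^(1/2) ≤ (KC)^(1/2)·HWB ≤ max(KHWB, CHWB)`,
so the five-term lower bound reduces to `LB = max(KHWB, CHWB, KCRS)`. -/
theorem case_1_dominance (B C K W H R S M : ℝ)
    (hB : 1 ≤ B) (hC : 1 ≤ C) (hK : 1 ≤ K) (hW : 1 ≤ W) (hH : 1 ≤ H)
    (hR : 1 ≤ R) (hS : 1 ≤ S) (hM : 1 ≤ M)
    (hKCRS : K * C * R * S ≤ M) :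
    K * C * H * W * B * R * S / M ≤
      K * C * H * W * B * Real.sqrt (R * S / M) ∧
    K * C * H * W * B * Real.sqrt (R * S / M) ≤
      Real.sqrt (K * C) * (H * W * B) ∧
    Real.sqrt (K * C) * (H * W * B) ≤ max (K * H * W * B) (C * H * W * B) ∧
    max (max (max (max (K * H * W * B) (C * H * W * B)) (K * C * R * S))
          (K * C * H * W * B * R * S / M))
        (K * C * H * W * B * Real.sqrt (R * S / M)) =
      max (max (K * H * W * B) (C * H * W * B)) (K * C * R * S) := by
  have hM0 : (0:ℝ) < M := lt_of_lt_of_le one_pos hM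
  have hq0 : 0 ≤ R * S / M := by positivity
  have hq1 : R * S / M ≤ 1 := by
    rw [div_le_one hM0]
    calc R * S = 1 * 1 * R * S := by ring
    _ ≤ K * C * R * S := by
        apply mul_le_mul_of_nonneg_right _ (by linarith)
        apply mul_le_mul_of_nonneg_right _ (by linarith)
        exact mul_le_mul hK hC one_pos.le (by linarith)
    _ ≤ M := hKCRS
  -- RS/M ≤ sqrt(RS/M)
  have hqs : R * S / M ≤ Real.sqrt (R * S / M) := by
    nlinarith [Real.sq_sqrt hq0, Real.sqrt_nonneg (R * S / M)]
  have h1 : K * C * H * W * B * R * S / M ≤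
      K * C * H * W * B * Real.sqrt (R * S / M) := by
    have := mul_le_mul_of_nonneg_left hqs (show (0:ℝ) ≤ K * C * H * W * B by positivity)
    calc K * C * H * W * B * R * S / M = K * C * H * W * B * (R * S / M) := by ring
    _ ≤ _ := this
  -- sqrt(KC) * sqrt(RS/M) ≤ 1
  have hKC0 : (0:ℝ) ≤ K * C := by positivity
  have hprod : Real.sqrt (K * C) * Real.sqrt (R * S / M) ≤ 1 := by
    rw [← Real.sqrt_mul hKC0, show (1:ℝ) = Real.sqrt 1 from (Real.sqrt_one).symm]
    apply Real.sqrt_le_sqrt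
    rw [mul_div_assoc' (K*C) (R*S) M, div_le_one hM0]
    calc K * C * (R * S) = K * C * R * S := by ring
    _ ≤ M := hKCRS
  have h2 : K * C * H * W * B * Real.sqrt (R * S / M) ≤
      Real.sqrt (K * C) * (H * W * B) := by
    have hsq : Real.sqrt (K * C) * Real.sqrt (K * C) = K * C := Real.mul_self_sqrt hKC0
    have hHWB : (0:ℝ) ≤ Real.sqrt (K * C) * (H * W * B) := by positivity
    calc K * C * H * W * B * Real.sqrt (R * S / M)
        = Real.sqrt (K * C) * (H * W * B) * (Real.sqrt (K * C) * Real.sqrt (R * S / M)) := by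
          rw [show Real.sqrt (K * C) * (H * W * B) * (Real.sqrt (K * C) * Real.sqrt (R * S / M))
            = (Real.sqrt (K * C) * Real.sqrt (K * C)) * (H * W * B) * Real.sqrt (R * S / M) by ring, hsq]
          ring
    _ ≤ Real.sqrt (K * C) * (H * W * B) * 1 := mul_le_mul_of_nonneg_left hprod hHWB
    _ = Real.sqrt (K * C) * (H * W * B) := by ring
  have h3 : Real.sqrt (K * C) * (H * W * B) ≤ max (K * H * W * B) (C * H * W * B) := by
    have hm : Real.sqrt (K * C) ≤ max K C := by
      have h0max : (0:ℝ) ≤ max K C := le_trans zero_le_one (le_trans hK (le_max_left K C))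
      rw [show max K C = Real.sqrt ((max K C) ^ 2) from (Real.sqrt_sq h0max).symm]
      apply Real.sqrt_le_sqrt
      have := mul_le_mul (le_max_left K C) (le_max_right K C) (by linarith) h0max
      nlinarith
    calc Real.sqrt (K * C) * (H * W * B) ≤ max K C * (H * W * B) :=
          mul_le_mul_of_nonneg_right hm (by positivity)
    _ = max (K * (H * W * B)) (C * (H * W * B)) :=
          max_mul_of_nonneg K C (by positivity)
    _ = max (K * H * W * B) (C * H * W * B) := by rw [show K * (H*W*B) = K*H*W*B by ring, show C * (H*W*B) = C*H*W*B by ring]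
  refine ⟨h1, h2, h3, ?_⟩
  have hA : K * C * H * W * B * R * S / M ≤ max (K * H * W * B) (C * H * W * B) :=
    h1.trans (h2.trans h3)
  have hB' : K * C * H * W * B * Real.sqrt (R * S / M) ≤ max (K * H * W * B) (C * H * W * B) :=
    h2.trans h3
  rw [max_eq_left, max_eq_left]
  · exact hA.trans (le_max_left _ _)
  · exact hB'.trans (le_max_of_le_left (le_max_left _ _))
end

section
/- (Feasibility in Upper Bound Case 1.2.) Let B, C, K, W, H, R, S, M be real numbers, each at least 1, with R ≤ W and S ≤ H. If CHWB ≥ M, KCRS ≤ M, and KHWB ≤ M, then there exists an admissible tiling (bB, bC, bK, bW, bH, bR, bS) with bK = K, bH = H, bW = W, bR = R, bS = S and bC·bB·HW = M, whose product satisfies bB·bC·bK·bW·bH·bR·bS = K·RS·M; consequently the blocked algorithm performs O(KCHWRSB·M/(KRSM)) = O(CHWB) reads and writes, matching the lower bound max(CHWB, KHWB, KCRS) = CHWB. -/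
/-- Feasibility in Upper Bound Case 1.2: if `CHWB ≥ M`, `KCRS ≤ M`, and
`KHWB ≤ M`, then there is an admissible tiling with `bK = K`, `bH = H`,
`bW = W`, `bR = R`, `bS = S` and `bC·bB·HW = M`, whose block product equals
`K·RS·M`; hence the blocked algorithm performs
`O(KCHWRSB·M/(KRSM)) = O(CHWB)` reads and writes, matching the lower bound
`max(CHWB, KHWB, KCRS) = CHWB`. -/
theorem case_1_2_feasible (B C K W H R S M : ℝ)
    (hB : 1 ≤ B) (hC : 1 ≤ C) (hK : 1 ≤ K) (hW : 1 ≤ W) (hH : 1 ≤ H)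
    (hR : 1 ≤ R) (hS : 1 ≤ S) (hM : 1 ≤ M) (hRW : R ≤ W) (hSH : S ≤ H)
    (h1 : M ≤ C * H * W * B) (h2 : K * C * R * S ≤ M)
    (h3 : K * H * W * B ≤ M) :
    (∃ bB bC : ℝ,
      1 ≤ bB ∧ bB ≤ B ∧ 1 ≤ bC ∧ bC ≤ C ∧
      bC * bB * (H * W) = M ∧
      AdmissibleTiling B C K W H R S M bB bC K W H R S ∧
      bB * bC * K * W * H * R * S = K * (R * S) * M) ∧
    max (max (C * H * W * B) (K * H * W * B)) (K * C * R * S) =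
      C * H * W * B := by
  have hHW : (0:ℝ) < H * W := by positivity
  set P : ℝ := M / (H * W) with hPdef
  have hKB1 : (1:ℝ) ≤ K * B := one_le_mul_of_one_le_of_one_le hK hB
  have hP1 : 1 ≤ P := by
    rw [le_div_iff₀ hHW]
    nlinarith [mul_le_mul_of_nonneg_left hKB1 (le_of_lt hHW)]
  have hPCB : P ≤ C * B := by
    rw [div_le_iff₀ hHW]
    nlinarith
  set bB : ℝ := min B P with hbB
  have hbB1 : 1 ≤ bB := le_min hB hP1
  have hbBpos : 0 < bB := lt_of_lt_of_le one_pos hbB1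
  have hbBB : bB ≤ B := min_le_left _ _
  have hbBP : bB ≤ P := min_le_right _ _
  set bC : ℝ := P / bB with hbC
  have hbC1 : 1 ≤ bC := (one_le_div hbBpos).2 hbBP
  have hbCC : bC ≤ C := by
    rcases le_total P B with h | h
    · have : bB = P := min_eq_right h
      rw [hbC, this, div_self (by linarith : P ≠ 0)]; exact hC
    · have hBB : bB = B := min_eq_left h
      rw [hbC, hBB, div_le_iff₀ (by linarith : (0:ℝ) < B)]
      nlinarith
  have hprod : bC * bB * (H * W) = M := by
    rw [hbC, div_mul_cancel₀ _ (ne_of_gt hbBpos), hPdef,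
      div_mul_cancel₀ _ (ne_of_gt hHW)]
  have hKHW : (0:ℝ) < K * H * W := by positivity
  have hKRS : (0:ℝ) < K * R * S := by positivity
  have hKB : K * H * W * bB ≤ M := by
    nlinarith [mul_le_mul_of_nonneg_left hbBB (le_of_lt hKHW)]
  have hKC : K * R * S * bC ≤ M := by
    nlinarith [mul_le_mul_of_nonneg_left hbCC (le_of_lt hKRS)]
  constructor
  · refine ⟨bB, bC, hbB1, hbBB, hbC1, hbCC, hprod, ?_, ?_⟩
    · exact ⟨hbB1, hbBB, hbC1, hbCC, hK, le_refl _, hW, le_refl _, hH, le_refl _,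
        hR, le_refl _, hS, le_refl _, hRW, hSH, hKB, le_of_eq (by rw [← hprod]; ring), hKC⟩
    · linear_combination K * R * S * hprod
  · have hAB : max (C * H * W * B) (K * H * W * B) = C * H * W * B :=
      max_eq_left (by linarith)
    rw [hAB]
    exact max_eq_left (by linarith)
end
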